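/- Let n ≥ 3 with 6 | n, let m ≥ 1, and let p : ℤ/mnℤ → ℤ/nℤ be reduction modulo n. Define p* : ℤ^{ℤ/nℤ} → ℤ^{ℤ/mnℤ} by (p* a)_j = a_{p(j)}. Then: (i) p* ∘ (1 − A_n^t) = (1 − A_{mn}^t) ∘ p*, so p* maps Im(1 − A_n^t) into Im(1 − A_{mn}^t) and ker(1 − A_n^t) into ker(1 − A_{mn}^t); (ii) for every i ∈ ℤ/nℤ, p*(δ_i) − m·δ_{i'} lies in Im(1 − A_{mn}^t), where i' ∈ ℤ/mnℤ is any lift of i (so on cokernels p* induces multiplication by m under the identification of classes); (iii) for a ∈ ker(1 − A_n^t), (p* a)_0 = a_0 and (p* a)_1 = a_1. -/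

import Mathlib

/-!
Pulling back along the covering is composition with the ring hom `p`, and for `N ≥ 3` the
operator `1 - A_Nᵀ` is `a ↦ a j - a (j - 1) - a (j + 1)`, which commutes with composition by
any ring hom between the rings `ℤ/Nℤ`. For the cokernel,
`D (δ_{c+1} + δ_{c+2}) = -(δ_c + δ_{c+3})`, so modulo the image `δ_c ≡ -δ_{c+3} ≡ δ_{c+6}`.
The pullback of `δ_i` is the sum of the `δ_j` over the `m` points `j` of the fibre over `i`;
these are congruent to `i'` modulo `n`, hence modulo `6`, so the pullback is congruent to
`m δ_{i'}`.
-/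

/-- The vertex adjacency matrix of the dihedral graph `D_N`:
`A_N(i,j) = 1` if `j = i + 1` or `j = i - 1` (mod `N`), and `0` otherwise. -/
noncomputable def dihedralAdj (N : ℕ) : Matrix (ZMod N) (ZMod N) ℤ :=
  Matrix.of fun i j => if j = i + 1 ∨ j = i - 1 then 1 else 0

/-- The endomorphism `1 - A_N^t` of `ℤ^{ℤ/Nℤ}`. -/
noncomputable def dihedralD (N : ℕ) [NeZero N] : (ZMod N → ℤ) →ₗ[ℤ] (ZMod N → ℤ) :=
  Matrix.mulVecLin (1 - (dihedralAdj N).transpose)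

open Finset

lemma zmod_two_ne_zero {N : ℕ} (hN : 3 ≤ N) : (2 : ZMod N) ≠ 0 := by
  intro h2
  have := Nat.le_of_dvd two_pos ((ZMod.natCast_eq_zero_iff 2 N).1 (by exact_mod_cast h2))
  omega

section dihedralD

variable {N : ℕ} [NeZero N]

lemma dihedralD_apply (h2 : (2 : ZMod N) ≠ 0) (a : ZMod N → ℤ) (j : ZMod N) :
    dihedralD N a j = a j - a (j - 1) - a (j + 1) := by
  have hne : j - 1 ≠ j + 1 := fun h => h2 (by linear_combination h.symm)
  have hnbrs : ({k | j = k + 1 ∨ j = k - 1} : Finset (ZMod N)) = {j - 1, j + 1} := by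
    ext k
    simp only [mem_filter, mem_univ, true_and, mem_insert, mem_singleton]
    grind
  rw [dihedralD, Matrix.mulVecLin_apply, Matrix.sub_mulVec, Matrix.one_mulVec, Pi.sub_apply]
  simp only [Matrix.mulVec, dotProduct, Matrix.transpose_apply, dihedralAdj,
    Matrix.of_apply, ite_mul, one_mul, zero_mul, sum_ite, sum_const_zero,
    add_zero, hnbrs, sum_pair hne]
  ring

lemma dihedralD_single (h2 : (2 : ZMod N) ≠ 0) (i : ZMod N) :
    dihedralD N (Pi.single i 1) = Pi.single i 1 - Pi.single (i - 1) 1 - Pi.single (i + 1) 1 := by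
  funext j
  simp only [dihedralD_apply h2, Pi.sub_apply, Pi.single_apply, sub_eq_iff_eq_add,
    ← eq_sub_iff_add_eq]
  ring

lemma single_add_single_add_three_mem_range (h2 : (2 : ZMod N) ≠ 0) (c : ZMod N) :
    Pi.single c 1 + Pi.single (c + 3) 1 ∈ LinearMap.range (dihedralD N) := by
  refine ⟨-(Pi.single (c + 1) 1 + Pi.single (c + 2) 1), ?_⟩
  simp only [map_neg, map_add, dihedralD_single h2]
  ring_nf

lemma single_add_six_sub_single_mem_range (h2 : (2 : ZMod N) ≠ 0) (c : ZMod N) :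
    Pi.single (c + 6) 1 - Pi.single c 1 ∈ LinearMap.range (dihedralD N) := by
  convert sub_mem (single_add_single_add_three_mem_range h2 (c + 3))
    (single_add_single_add_three_mem_range h2 c) using 1
  rw [add_assoc, show (3 + 3 : ZMod N) = 6 by norm_num]
  abel

lemma single_add_six_mul_sub_single_mem_range (h2 : (2 : ZMod N) ≠ 0) (c : ZMod N) (s : ℕ) :
    Pi.single (c + 6 * s) 1 - Pi.single c 1 ∈ LinearMap.range (dihedralD N) := by
  induction s with
  | zero => simp
  | succ s ih =>
    have h := add_mem (single_add_six_sub_single_mem_range h2 (c + 6 * s)) ih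
    rwa [sub_add_sub_cancel, add_assoc, ← mul_add_one, ← Nat.cast_succ] at h

end dihedralD

section covering

lemma two_ne_zero_of_ringHom {R S : Type*} [NonAssocSemiring R] [NonAssocSemiring S]
    (f : R →+* S) (h2 : (2 : S) ≠ 0) : (2 : R) ≠ 0 :=
  ne_zero_of_map (f := f) (by rwa [map_ofNat])

lemma dihedralD_comp_ringHom {M N : ℕ} [NeZero M] [NeZero N] (f : ZMod M →+* ZMod N)
    (h2 : (2 : ZMod N) ≠ 0) (a : ZMod N → ℤ) :
    dihedralD N a ∘ f = dihedralD M (a ∘ f) := by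
  funext j
  simp only [Function.comp_apply, dihedralD_apply h2,
    dihedralD_apply (two_ne_zero_of_ringHom f h2), map_sub, map_add, map_one]

lemma comp_single_eq_sum_fiber {α β M : Type*} [Fintype α] [DecidableEq α] [DecidableEq β]
    [AddCommMonoid M] (f : α → β) (i : β) (x : M) :
    Pi.single i x ∘ f = ∑ j with f j = i, Pi.single j x := by
  funext k
  simp [Finset.sum_apply, Pi.single_apply]

lemma card_fiber_ringHom {m n : ℕ} [NeZero n] [NeZero (m * n)] (f : ZMod (m * n) →+* ZMod n)
    (i : ZMod n) : #{j | f j = i} = m := by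
  have hfibers : ∀ i', #{j | f j = i'} = #{j | f j = i} := fun i' =>
    AddMonoidHom.card_fiber_eq_of_mem_range f (ZMod.ringHom_surjective f i')
      (ZMod.ringHom_surjective f i)
  have hcard := card_eq_sum_card_fiberwise (f := f) (s := univ) (t := univ) (by simp)
  rw [sum_congr rfl fun i' _ => hfibers i', sum_const, card_univ, card_univ, ZMod.card,
    ZMod.card, smul_eq_mul] at hcard
  exact Nat.eq_of_mul_eq_mul_left (NeZero.pos n) (hcard.symm.trans (mul_comm m n))

lemma exists_eq_add_of_ringHom_eq {M N : ℕ} [NeZero M] (f : ZMod M →+* ZMod N)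
    {j i : ZMod M} (h : f j = f i) : ∃ s : ℕ, j = i + (N * s : ℕ) := by
  have hval : ((j - i).val : ZMod N) = 0 := by
    rw [← map_natCast f, ZMod.natCast_zmod_val, map_sub, h, sub_self]
  obtain ⟨s, hs⟩ := (ZMod.natCast_eq_zero_iff _ N).1 hval
  exact ⟨s, by rw [← hs, ZMod.natCast_zmod_val, add_sub_cancel]⟩

lemma comp_single_sub_smul_single_mem_range {m n : ℕ} [NeZero n] [NeZero (m * n)]
    (h6 : 6 ∣ n) (h2 : (2 : ZMod n) ≠ 0) (f : ZMod (m * n) →+* ZMod n) (i' : ZMod (m * n)) :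
    Pi.single (f i') (1 : ℤ) ∘ f - (m : ℤ) • Pi.single i' 1 ∈
      LinearMap.range (dihedralD (m * n)) := by
  have hm : ((m : ℤ) • Pi.single i' 1 : ZMod (m * n) → ℤ) =
      ∑ j with f j = f i', Pi.single i' 1 := by
    rw [sum_const, card_fiber_ringHom, natCast_zsmul]
  rw [comp_single_eq_sum_fiber, hm, ← sum_sub_distrib]
  refine sum_mem fun j hj => ?_
  obtain ⟨s, rfl⟩ := exists_eq_add_of_ringHom_eq f (mem_filter.1 hj).2
  obtain ⟨t, rfl⟩ := h6
  rw [show ((6 * t * s : ℕ) : ZMod (m * (6 * t))) = 6 * (t * s : ℕ) by push_cast; ring]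
  exact single_add_six_mul_sub_single_mem_range (two_ne_zero_of_ringHom f h2) i' (t * s)

end covering

theorem dihedral_covering_map_general (n m : ℕ) (hn : 3 ≤ n) (h6 : 6 ∣ n)
    [NeZero n] [NeZero (m * n)]
    (p : ZMod (m * n) →+* ZMod n)
    (pstar : (ZMod n → ℤ) → (ZMod (m * n) → ℤ))
    (hpstar : ∀ (a : ZMod n → ℤ) (j : ZMod (m * n)), pstar a j = a (p j)) :
    (∀ a : ZMod n → ℤ, pstar (dihedralD n a) = dihedralD (m * n) (pstar a)) ∧
    (∀ a : ZMod n → ℤ, a ∈ LinearMap.range (dihedralD n) →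
      pstar a ∈ LinearMap.range (dihedralD (m * n))) ∧
    (∀ a : ZMod n → ℤ, a ∈ LinearMap.ker (dihedralD n) →
      pstar a ∈ LinearMap.ker (dihedralD (m * n))) ∧
    (∀ (i : ZMod n) (i' : ZMod (m * n)), p i' = i →
      pstar (Pi.single i (1 : ℤ)) - (m : ℤ) • Pi.single i' (1 : ℤ)
        ∈ LinearMap.range (dihedralD (m * n))) ∧
    (∀ a : ZMod n → ℤ, a ∈ LinearMap.ker (dihedralD n) →
      pstar a 0 = a 0 ∧ pstar a 1 = a 1) := by
  have h2 := zmod_two_ne_zero hn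
  obtain rfl : pstar = fun a => a ∘ p := funext₂ hpstar
  have hcomm := dihedralD_comp_ringHom p h2
  refine ⟨hcomm, ?_, ?_, ?_, ?_⟩
  · rintro _ ⟨b, rfl⟩
    exact ⟨b ∘ p, (hcomm b).symm⟩
  · intro a ha
    rw [LinearMap.mem_ker] at ha ⊢
    rw [← hcomm, ha, Pi.zero_comp]
  · rintro _ i' rfl
    exact comp_single_sub_smul_single_mem_range h6 h2 p i'
  · intro a _
    simp only [Function.comp_apply, map_zero, map_one, and_self]

/-- behaviour of the map `p^*` induced by the covering of `D_n` by `D_{mn}`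
(reduction `p : ℤ/mnℤ → ℤ/nℤ`), where `6 ∣ n`: it intertwines `1 - A_n^t` and
`1 - A_{mn}^t` (hence maps image into image and kernel into kernel); on the cokernel it
induces multiplication by `m` on classes of point masses; and on the kernel it preserves
the values at `0` and `1`. -/
theorem dihedral_covering_map (n m : ℕ) (hn : 3 ≤ n) (h6 : 6 ∣ n) (hm : 1 ≤ m)
    [NeZero n] [NeZero (m * n)] (hdvd : n ∣ m * n)
    (p : ZMod (m * n) →+* ZMod n) (hp : p = ZMod.castHom hdvd (ZMod n))
    (pstar : (ZMod n → ℤ) → (ZMod (m * n) → ℤ))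
    (hpstar : ∀ (a : ZMod n → ℤ) (j : ZMod (m * n)), pstar a j = a (p j)) :
    (∀ a : ZMod n → ℤ, pstar (dihedralD n a) = dihedralD (m * n) (pstar a)) ∧
    (∀ a : ZMod n → ℤ, a ∈ LinearMap.range (dihedralD n) →
      pstar a ∈ LinearMap.range (dihedralD (m * n))) ∧
    (∀ a : ZMod n → ℤ, a ∈ LinearMap.ker (dihedralD n) →
      pstar a ∈ LinearMap.ker (dihedralD (m * n))) ∧
    (∀ (i : ZMod n) (i' : ZMod (m * n)), p i' = i →
      pstar (Pi.single i (1 : ℤ)) - (m : ℤ) • Pi.single i' (1 : ℤ)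
        ∈ LinearMap.range (dihedralD (m * n))) ∧
    (∀ a : ZMod n → ℤ, a ∈ LinearMap.ker (dihedralD n) →
      pstar a 0 = a 0 ∧ pstar a 1 = a 1) :=
  dihedral_covering_map_general n m hn h6 p pstar hpstar
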